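/- arXiv:1812.10506 — 5 statements merged into one kernel-verified Lean document; each statement's English description precedes it below -/
import Mathlib

section
/- Let ψ₁,…,ψ_N be pairwise distinct reals and y ∈ ℝ. The matrix G with entries G_{ij} = σ(y+ψ_j)^i (for 1 ≤ i,j ≤ N), where σ is the sigmoid, is invertible. -/
/-!
The transpose of `G` is the Vandermonde matrix of the values `σ(y + ψ j)` with its rows scaled
by those same values. They are nonzero, and distinct because `σ` is strictly increasing, so both
factors of `det G` are nonzero.
-/

noncomputable def sigmoid : ℝ → ℝ := fun x => 1 / (1 + Real.exp (-x))

open Matrix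

lemma sigmoid_eq_real_sigmoid : sigmoid = Real.sigmoid := by
  funext x
  rw [sigmoid, Real.sigmoid_def, one_div]

namespace Matrix

variable {R : Type*} [CommRing R] {n : ℕ}

lemma transpose_of_pow_succ_eq_diagonal_mul_vandermonde (v : Fin n → R) :
    (of fun i j : Fin n ↦ v j ^ ((i : ℕ) + 1))ᵀ = diagonal v * vandermonde v := by
  ext i j
  simp [vandermonde_apply, pow_succ', diagonal_mul]

lemma det_of_pow_succ (v : Fin n → R) :
    (of fun i j : Fin n ↦ v j ^ ((i : ℕ) + 1)).det = (∏ i, v i) * (vandermonde v).det := by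
  rw [← det_transpose, transpose_of_pow_succ_eq_diagonal_mul_vandermonde, det_mul,
    det_diagonal]

lemma isUnit_of_pow_succ {K : Type*} [Field K] {v : Fin n → K} (hv : Function.Injective v)
    (hv₀ : ∀ i, v i ≠ 0) : IsUnit (of fun i j : Fin n ↦ v j ^ ((i : ℕ) + 1)) := by
  rw [isUnit_iff_isUnit_det, det_of_pow_succ, isUnit_iff_ne_zero]
  exact mul_ne_zero (Finset.prod_ne_zero_iff.mpr fun i _ ↦ hv₀ i)
    (det_vandermonde_ne_zero_iff.mpr hv)

end Matrix

theorem sigmoid_power_matrix_invertible {N : ℕ} (ψ : Fin N → ℝ)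
    (hψ : Function.Injective ψ) (y : ℝ)
    (G : Matrix (Fin N) (Fin N) ℝ)
    (hG : ∀ i j, G i j = (sigmoid (y + ψ j)) ^ ((i : ℕ) + 1)) :
    IsUnit G := by
  obtain rfl : G = of fun i j : Fin N ↦ sigmoid (y + ψ j) ^ ((i : ℕ) + 1) := ext hG
  rw [sigmoid_eq_real_sigmoid]
  exact isUnit_of_pow_succ (Real.sigmoid_injective.comp ((add_right_injective y).comp hψ))
    fun j ↦ (Real.sigmoid_pos _).ne'
end

section
/- Let ψ₁,…,ψ_N be pairwise distinct real numbers and γ ∈ ℝ^N. If ∑_{i=1}^N γ_i σ(y+ψ_i) = 0 for all y ∈ ℝ, where σ is the sigmoid, then γ = 0. -/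
theorem sigmoid_combination_zero {N : ℕ} (hN : 0 < N) (ψ : Fin N → ℝ)
    (hψ : Function.Injective ψ) (γ : Fin N → ℝ)
    (h : ∀ y : ℝ, ∑ i, γ i * sigmoid (y + ψ i) = 0) :
    γ = 0 := by
  classical
  set a : Fin N → ℝ := fun i => Real.exp (-ψ i) with ha
  have hapos : ∀ i, 0 < a i := fun i => Real.exp_pos _
  have hainj : Function.Injective a := by
    intro i j hij
    exact hψ (by simpa using Real.exp_injective hij)
  have hsig : ∀ (t : ℝ), 0 < t → ∀ i, sigmoid (Real.log t + ψ i) = t / (t + a i) := by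
    intro t ht i
    have hx : Real.exp (-(Real.log t + ψ i)) = a i / t := by
      rw [neg_add, Real.exp_add, Real.exp_neg, Real.exp_log ht, ha]
      ring
    rw [sigmoid]
    simp only [hx]
    rw [div_eq_div_iff (by positivity) (by positivity)]
    field_simp
  set P : Polynomial ℝ := ∑ i, Polynomial.C (γ i) * Polynomial.X *
      ∏ j ∈ Finset.univ.erase i, (Polynomial.X + Polynomial.C (a j)) with hP
  have hPeval : ∀ t : ℝ, P.eval t =
      ∑ i, γ i * t * ∏ j ∈ Finset.univ.erase i, (t + a j) := by
    intro t
    simp [hP, Polynomial.eval_finset_sum, Polynomial.eval_prod]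
  have hPzero : ∀ t : ℝ, 0 < t → P.eval t = 0 := by
    intro t ht
    have key : ∀ i : Fin N, γ i * t * ∏ j ∈ Finset.univ.erase i, (t + a j)
        = γ i * sigmoid (Real.log t + ψ i) * ∏ j, (t + a j) := by
      intro i
      rw [hsig t ht i, ← Finset.mul_prod_erase Finset.univ _ (Finset.mem_univ i)]
      have hne : t + a i ≠ 0 := by positivity
      field_simp
    rw [hPeval]
    calc ∑ i, γ i * t * ∏ j ∈ Finset.univ.erase i, (t + a j)
        = ∑ i, γ i * sigmoid (Real.log t + ψ i) * ∏ j, (t + a j) :=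
          Finset.sum_congr rfl (fun i _ => key i)
      _ = (∑ i, γ i * sigmoid (Real.log t + ψ i)) * ∏ j, (t + a j) := by
          rw [Finset.sum_mul]
      _ = 0 := by rw [h (Real.log t), zero_mul]
  have hP0 : P = 0 := by
    apply Polynomial.eq_zero_of_infinite_isRoot
    apply Set.Infinite.mono (s := Set.Ioi (0:ℝ))
    · exact fun t ht => hPzero t ht
    · exact Set.Ioi_infinite 0
  funext i
  have heval := hPeval (-(a i))
  rw [hP0, Polynomial.eval_zero] at heval
  have hvanish : ∀ k ∈ Finset.univ, k ≠ i →
      γ k * (-(a i)) * ∏ j ∈ Finset.univ.erase k, (-(a i) + a j) = 0 := by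
    intro k _ hk
    have hz : ∏ j ∈ Finset.univ.erase k, (-(a i) + a j) = 0 := by
      apply Finset.prod_eq_zero (Finset.mem_erase.mpr ⟨Ne.symm hk, Finset.mem_univ i⟩)
      ring
    rw [hz, mul_zero]
  have heq : γ i * (-(a i)) * ∏ j ∈ Finset.univ.erase i, (-(a i) + a j) = 0 := by
    rw [← Finset.sum_eq_single i hvanish (fun hi => absurd (Finset.mem_univ i) hi)]
    exact heval.symm
  have hprod : ∏ j ∈ Finset.univ.erase i, (-(a i) + a j) ≠ 0 := by
    apply Finset.prod_ne_zero_iff.mpr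
    intro j hj
    have hne : a j ≠ a i := fun he => (Finset.mem_erase.mp hj).1 (hainj he)
    intro hz
    exact hne (by linarith)
  have hai : -(a i) ≠ 0 := by have := hapos i; linarith
  by_contra hγ
  exact (mul_ne_zero (mul_ne_zero hγ hai) hprod) heq
end

section
/- Let ψ₁,…,ψ_N be pairwise distinct reals, γ ∈ ℝ^N, and j ≥ 1. If ∑_{i=1}^N γ_i σ(y+ψ_i)^j = 0 for all y ∈ ℝ, then ∑_{i=1}^N γ_i σ(y+ψ_i)^{j+1} = 0 for all y ∈ ℝ. -/
theorem hasDerivAt_sigmoid (x : ℝ) :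
    HasDerivAt sigmoid (sigmoid x * (1 - sigmoid x)) x := by
  have hpos : 1 + Real.exp (-x) ≠ 0 := by positivity
  have h := ((hasDerivAt_neg' x).exp.const_add 1).fun_inv hpos
  simp only [← one_div] at h
  refine h.congr_deriv ?_
  simp only [sigmoid]
  field_simp
  ring

section Logistic

variable {f : ℝ → ℝ}

theorem HasDerivAt.pow_of_logistic {x : ℝ} (hf : HasDerivAt f (f x * (1 - f x)) x) (n : ℕ) :
    HasDerivAt (fun x => f x ^ n) (n * (f x ^ n - f x ^ (n + 1))) x := by
  refine (hf.fun_pow n).congr_deriv ?_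
  cases n with
  | zero => simp
  | succ n => simp only [Nat.add_sub_cancel, Nat.cast_succ]; ring

variable {ι : Type*} [Fintype ι] (γ ψ : ι → ℝ)

theorem hasDerivAt_sum_mul_pow_comp_add_of_logistic
    (hf : ∀ x, HasDerivAt f (f x * (1 - f x)) x) (n : ℕ) (y : ℝ) :
    HasDerivAt (fun y => ∑ i, γ i * f (y + ψ i) ^ n)
      (n * (∑ i, γ i * f (y + ψ i) ^ n - ∑ i, γ i * f (y + ψ i) ^ (n + 1))) y := by
  have hterm (i : ι) : HasDerivAt (fun y => γ i * f (y + ψ i) ^ n)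
      (γ i * (n * (f (y + ψ i) ^ n - f (y + ψ i) ^ (n + 1)))) y :=
    (((hf (y + ψ i)).comp_add_const y (ψ i)).pow_of_logistic n).const_mul (γ i)
  refine (HasDerivAt.fun_sum fun i _ => hterm i).congr_deriv ?_
  rw [mul_sub, Finset.mul_sum, Finset.mul_sum, ← Finset.sum_sub_distrib]
  exact Finset.sum_congr rfl fun i _ => by ring

theorem sum_mul_pow_succ_comp_add_eq_zero_of_logistic
    (hf : ∀ x, HasDerivAt f (f x * (1 - f x)) x) {n : ℕ} (hn : n ≠ 0)
    (h : ∀ y, ∑ i, γ i * f (y + ψ i) ^ n = 0) (y : ℝ) :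
    ∑ i, γ i * f (y + ψ i) ^ (n + 1) = 0 := by
  have hderiv := hasDerivAt_sum_mul_pow_comp_add_of_logistic γ ψ hf n y
  rw [show (fun y => ∑ i, γ i * f (y + ψ i) ^ n) = fun _ => 0 from funext h, h y] at hderiv
  simpa [hn] using (hasDerivAt_const y (0 : ℝ)).unique hderiv

end Logistic

theorem sigmoid_power_identity_step {N : ℕ} (ψ : Fin N → ℝ) (γ : Fin N → ℝ)
    (j : ℕ) (hj : 1 ≤ j)
    (h : ∀ y : ℝ, ∑ i, γ i * (sigmoid (y + ψ i)) ^ j = 0) :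
    ∀ y : ℝ, ∑ i, γ i * (sigmoid (y + ψ i)) ^ (j + 1) = 0 :=
  sum_mul_pow_succ_comp_add_eq_zero_of_logistic γ ψ hasDerivAt_sigmoid
    (Nat.one_le_iff_ne_zero.mp hj) h
end

section
/- Let ψ₁,…,ψ_N be distinct reals and define ρ : ℝ → ℝ^N by ρ(y)_i = σ(y+ψ_i) with σ the sigmoid. Then the set {ρ(y) : y ∈ ℝ} spans ℝ^N; equivalently, ρ(ℝ) is not contained in any proper linear subspace of ℝ^N. -/
open Filter Topology

/-- If `∑ c i * b i ^ k / (1 + b i * s) = 0` for all `s > 0`, then the value at `s = 0`,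
namely `∑ c i * b i ^ k`, is also `0`, by continuity. -/
lemma sum_pow_eq_zero_of_sum_div_eq_zero {N : ℕ} (b c : Fin N → ℝ) (hb : ∀ i, 0 < b i)
    (k : ℕ) (h : ∀ s : ℝ, 0 < s → ∑ i, c i * b i ^ k / (1 + b i * s) = 0) :
    ∑ i, c i * b i ^ k = 0 := by
  set f : ℝ → ℝ := fun s => ∑ i, c i * b i ^ k / (1 + b i * s) with hf
  have h1 : Tendsto f (𝓝[>] (0:ℝ)) (𝓝 (∑ i, c i * b i ^ k)) := by
    apply tendsto_finset_sum
    intro i _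
    have hc : ContinuousAt (fun s : ℝ => c i * b i ^ k / (1 + b i * s)) 0 := by
      apply ContinuousAt.div continuousAt_const (by fun_prop)
      simp
    have := hc.continuousWithinAt (s := Set.Ioi (0:ℝ))
    simpa [ContinuousWithinAt] using this
  have h2 : Tendsto f (𝓝[>] (0:ℝ)) (𝓝 0) := by
    apply tendsto_const_nhds.congr'
    filter_upwards [self_mem_nhdsWithin] with s hs
    exact (h s hs).symm
  exact tendsto_nhds_unique h1 h2

lemma key_rec {N : ℕ} (b c : Fin N → ℝ) (hb : ∀ i, 0 < b i)
    (h : ∀ s : ℝ, 0 < s → ∑ i, c i / (1 + b i * s) = 0) :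
    ∀ k : ℕ, ∀ s : ℝ, 0 < s → ∑ i, c i * b i ^ k / (1 + b i * s) = 0 := by
  intro k
  induction k with
  | zero => simpa using h
  | succ k ih =>
    intro s hs
    have hzero : ∑ i, c i * b i ^ k = 0 := sum_pow_eq_zero_of_sum_div_eq_zero b c hb k ih
    have hden : ∀ i : Fin N, (1 : ℝ) + b i * s ≠ 0 := fun i => by
      have := hb i; nlinarith
    have hterm : ∀ i : Fin N,
        c i * b i ^ (k + 1) / (1 + b i * s)
          = (c i * b i ^ k - c i * b i ^ k / (1 + b i * s)) / s := by
      intro i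
      have hdi := hden i
      field_simp
      ring
    calc ∑ i, c i * b i ^ (k + 1) / (1 + b i * s)
        = ∑ i, (c i * b i ^ k - c i * b i ^ k / (1 + b i * s)) / s :=
          Finset.sum_congr rfl fun i _ => hterm i
      _ = ((∑ i, c i * b i ^ k) - ∑ i, c i * b i ^ k / (1 + b i * s)) / s := by
          rw [← Finset.sum_div, Finset.sum_sub_distrib]
      _ = 0 := by rw [hzero, ih s hs]; simp

theorem sigmoid_curve_spans {N : ℕ} (hN : 0 < N) (ψ : Fin N → ℝ)
    (hψ : Function.Injective ψ)
    (ρ : ℝ → (Fin N → ℝ)) (hρ : ∀ y i, ρ y i = sigmoid (y + ψ i)) :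
    Submodule.span ℝ (Set.range ρ) = ⊤ := by
  by_contra hne
  obtain ⟨f, hf0, hfmap⟩ :=
    Submodule.exists_dual_map_eq_bot_of_lt_top (lt_top_iff_ne_top.mpr hne) inferInstance
  set c : Fin N → ℝ := fun i => f fun j => if i = j then 1 else 0 with hc
  have hfx : ∀ x : Fin N → ℝ, f x = ∑ i, x i * c i := by
    intro x
    simpa [smul_eq_mul] using LinearMap.pi_apply_eq_sum_univ f x
  have hfρ : ∀ y : ℝ, f (ρ y) = 0 := by
    intro y
    have : f (ρ y) ∈ Submodule.map f (Submodule.span ℝ (Set.range ρ)) :=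
      Submodule.mem_map_of_mem (Submodule.subset_span ⟨y, rfl⟩)
    rw [hfmap] at this
    simpa using this
  set b : Fin N → ℝ := fun i => Real.exp (-ψ i) with hbdef
  have hb : ∀ i, 0 < b i := fun i => Real.exp_pos _
  have hbinj : Function.Injective b := fun i j hij => by
    apply hψ
    have := Real.exp_injective hij
    linarith
  have hkey : ∀ s : ℝ, 0 < s → ∑ i, c i / (1 + b i * s) = 0 := by
    intro s hs
    have h0 := hfρ (-Real.log s)
    rw [hfx] at h0
    have hes : Real.exp (Real.log s) = s := Real.exp_log hs
    calc ∑ i, c i / (1 + b i * s)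
        = ∑ i, ρ (-Real.log s) i * c i := by
          refine Finset.sum_congr rfl fun i _ => ?_
          rw [hρ, sigmoid]
          rw [neg_add, neg_neg, Real.exp_add, hes, hbdef]
          ring
      _ = 0 := h0
  have hc0 : c = 0 := by
    apply Matrix.eq_zero_of_forall_pow_sum_mul_pow_eq_zero hbinj
    intro k
    exact sum_pow_eq_zero_of_sum_div_eq_zero b c hb k (key_rec b c hb hkey k)
  apply hf0
  apply LinearMap.ext
  intro x
  rw [hfx x, hc0]
  simp
end

section
/- Interpolation capability of TELM (full statement, deterministic version): given N pairwise distinct input tensors X₁,…,X_N ∈ ℝ^{I₁×⋯×I_K} and any labels t₁,…,t_N ∈ ℝ, suppose weights W₁,…,W_N (tensors of the same shape) are chosen so that for every j the N real numbers ⟨W_j, X_i⟩, i = 1,…,N, are pairwise distinct. Then there exist biases b₁,…,b_N ∈ ℝ and output weights β ∈ ℝ^N such that ∑_{j=1}^N β_j σ(⟨W_j, X_i⟩ + b_j) = t_i for all i, where σ is the sigmoid. -/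
open Polynomial Finset Submodule Module

section PartialFractions

variable {K ι : Type*} [Field K] [Fintype ι] [DecidableEq ι] (c d : ι → K)

theorem sum_mul_prod_erase_eq_sum_div_mul_prod {t : K} (ht : ∀ k, 1 + d k * t ≠ 0) :
    ∑ i, c i * ∏ k ∈ univ.erase i, (1 + d k * t)
      = (∑ i, c i / (1 + d i * t)) * ∏ k, (1 + d k * t) := by
  rw [sum_mul]
  refine sum_congr rfl fun i _ => ?_
  rw [← mul_prod_erase univ (fun k => 1 + d k * t) (mem_univ i), ← mul_assoc,
    div_mul_cancel₀ _ (ht i)]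

theorem sum_mul_prod_erase_at_pole {i : ι} (hi : d i ≠ 0) :
    ∑ j, c j * ∏ k ∈ univ.erase j, (1 + d k * -(d i)⁻¹)
      = c i * ∏ k ∈ univ.erase i, (1 + d k * -(d i)⁻¹) := by
  refine sum_eq_single i (fun j _ hji => ?_) (by simp)
  rw [prod_eq_zero (i := i) (by simp [Ne.symm hji]) (by field_simp; ring), mul_zero]

theorem prod_erase_at_pole_ne_zero (hd : Function.Injective d) {i : ι} (hi : d i ≠ 0) :
    ∏ k ∈ univ.erase i, (1 + d k * -(d i)⁻¹) ≠ 0 := by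
  refine prod_ne_zero_iff.mpr fun k hk hzero => (ne_of_mem_erase hk) (hd ?_)
  field_simp at hzero
  linear_combination -hzero

end PartialFractions

theorem eq_zero_of_sum_div_one_add_mul_eq_zero {K ι : Type*} [Field K] [Fintype ι]
    {c d : ι → K} (hd : Function.Injective d) (hd0 : ∀ i, d i ≠ 0) {S : Set K}
    (hS : S.Infinite) (hpole : ∀ t ∈ S, ∀ k, 1 + d k * t ≠ 0)
    (h : ∀ t ∈ S, ∑ i, c i / (1 + d i * t) = 0) : c = 0 := by
  classical
  set P : K[X] := ∑ i, C (c i) * ∏ k ∈ univ.erase i, (1 + C (d k) * X)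
  have hP_eval : ∀ t, P.eval t = ∑ i, c i * ∏ k ∈ univ.erase i, (1 + d k * t) := by
    intro t
    simp [P, eval_finsetSum, eval_prod]
  have hP : P = 0 := by
    refine P.eq_zero_of_infinite_isRoot (hS.mono fun t ht => ?_)
    rw [Set.mem_ofPred_eq, IsRoot.def, hP_eval,
      sum_mul_prod_erase_eq_sum_div_mul_prod c d (hpole t ht), h t ht, zero_mul]
  funext i
  have hroot := hP_eval (-(d i)⁻¹)
  rw [hP, eval_zero, sum_mul_prod_erase_at_pole c d (hd0 i)] at hroot
  exact (mul_eq_zero.mp hroot.symm).resolve_right (prod_erase_at_pole_ne_zero d hd (hd0 i))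

theorem sigmoid_add_neg_log (a : ℝ) {t : ℝ} (ht : 0 < t) :
    sigmoid (a + -Real.log t) = 1 / (1 + Real.exp (-a) * t) := by
  rw [sigmoid, neg_add, neg_neg, Real.exp_add, Real.exp_log ht]

theorem linearIndependent_sigmoid_add {ι : Type*} [Fintype ι] {ψ : ι → ℝ}
    (hψ : Function.Injective ψ) :
    LinearIndependent ℝ (fun i (y : ℝ) => sigmoid (ψ i + y)) := by
  rw [Fintype.linearIndependent_iff]
  intro c hc
  have hvanish : ∀ t ∈ Set.Ioi (0 : ℝ), ∑ i, c i / (1 + Real.exp (-ψ i) * t) = 0 := by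
    intro t ht
    have := congrFun hc (-Real.log t)
    simp only [Finset.sum_apply, Pi.smul_apply, smul_eq_mul, Pi.zero_apply,
      sigmoid_add_neg_log _ ht] at this
    simpa only [mul_one_div] using this
  have hd : Function.Injective fun i => Real.exp (-ψ i) :=
    fun a b hab => hψ (neg_injective (Real.exp_injective hab))
  have hpole : ∀ t ∈ Set.Ioi (0 : ℝ), ∀ k, 1 + Real.exp (-ψ k) * t ≠ 0 :=
    fun t ht k => (add_pos one_pos (mul_pos (Real.exp_pos _) ht)).ne'
  exact congrFun (eq_zero_of_sum_div_one_add_mul_eq_zero hd (fun i => (Real.exp_pos _).ne')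
    (Set.Ioi_infinite 0) hpole hvanish)

theorem span_range_sigmoid_add_eq_top {ι : Type*} [Fintype ι] {ψ : ι → ℝ}
    (hψ : Function.Injective ψ) :
    span ℝ (Set.range fun (y : ℝ) i => sigmoid (ψ i + y)) = ⊤ :=
  span_flip_eq_top_iff_linearIndependent.mpr (linearIndependent_sigmoid_add hψ)

theorem exists_linearIndependent_of_span_eq_top {K V : Type*} [DivisionRing K] [AddCommGroup V]
    [Module K V] [FiniteDimensional K V] {n : ℕ} (hn : n ≤ finrank K V) (S : Fin n → Set V)
    (hS : ∀ j, span K (S j) = ⊤) :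
    ∃ v : Fin n → V, (∀ j, v j ∈ S j) ∧ LinearIndependent K v := by
  induction n with
  | zero => exact ⟨Fin.elim0, fun j => j.elim0, linearIndependent_empty_type⟩
  | succ m ih =>
    obtain ⟨v, hvS, hv⟩ := ih (by omega) (fun j => S j.castSucc) (fun j => hS j.castSucc)
    have hspan : span K (Set.range v) ≠ ⊤ := fun htop => by
      have := finrank_span_eq_card hv
      rw [htop, finrank_top, Fintype.card_fin] at this
      omega
    obtain ⟨x, hxS, hx⟩ : ∃ x ∈ S (Fin.last m), x ∉ span K (Set.range v) := by
      by_contra! hsub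
      exact hspan (eq_top_iff.mpr (hS (Fin.last m) ▸ span_le.mpr hsub))
    refine ⟨Fin.snoc v x, Fin.lastCases (by simpa using hxS) (fun j => by simpa using hvS j),
      linearIndependent_finSnoc.mpr ⟨hv, hx⟩⟩

theorem telm_interpolation_capability_general {N M : ℕ}
    (X : Fin N → (Fin M → ℝ))
    (t : Fin N → ℝ)
    (W : Fin N → (Fin M → ℝ))
    (hW : ∀ j : Fin N, ∀ i i' : Fin N, i ≠ i' →
      dotProduct (W j) (X i) ≠ dotProduct (W j) (X i')) :
    ∃ (b : Fin N → ℝ) (β : Fin N → ℝ),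
      ∀ i : Fin N,
        ∑ j, β j * sigmoid (dotProduct (W j) (X i) + b j) = t i := by
  have hspan : ∀ j, span ℝ (Set.range fun (y : ℝ) i => sigmoid (W j ⬝ᵥ X i + y)) = ⊤ :=
    fun j => span_range_sigmoid_add_eq_top fun i i' h => not_imp_not.mp (hW j i i') h
  obtain ⟨v, hvS, hv⟩ := exists_linearIndependent_of_span_eq_top (by simp) _ hspan
  choose b hb using hvS
  have ht : t ∈ span ℝ (Set.range v) := by
    rw [hv.span_eq_top_of_card_eq_finrank' (by simp)]
    exact mem_top
  obtain ⟨β, hβ⟩ := (mem_span_range_iff_exists_fun ℝ).mp ht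
  refine ⟨b, β, fun i => ?_⟩
  simpa [← hb] using congrFun hβ i

theorem telm_interpolation_capability {N M : ℕ}
    (X : Fin N → (Fin M → ℝ)) (hX : Function.Injective X)
    (t : Fin N → ℝ)
    (W : Fin N → (Fin M → ℝ))
    (hW : ∀ j : Fin N, ∀ i i' : Fin N, i ≠ i' →
      dotProduct (W j) (X i) ≠ dotProduct (W j) (X i')) :
    ∃ (b : Fin N → ℝ) (β : Fin N → ℝ),
      ∀ i : Fin N,
        ∑ j, β j * sigmoid (dotProduct (W j) (X i) + b j) = t i :=
  telm_interpolation_capability_general X t W hW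
end
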